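/- arXiv:2405.08741 — 4 statements merged into one kernel-verified Lean document; each statement's English description precedes it below -/
import Mathlib

section
/- Over F_2, for n ≥ 2, the set consisting of all monic irreducible polynomials of degree n, all products (x+1)·g with g monic irreducible of degree n−1 and g ≠ x, together with (x+1)^n, is a family in which any two distinct elements have gcd of degree at most 1, and all elements lie in S_n. -/
open Polynomial

private lemma s_eq : (X + 1 : (ZMod 2)[X]) = X - C 1 := by
  rw [C_1, sub_eq_add_neg, CharTwo.neg_eq]

private lemma s_monic : (X + 1 : (ZMod 2)[X]).Monic := by
  rw [s_eq]; exact monic_X_sub_C 1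

private lemma s_deg : (X + 1 : (ZMod 2)[X]).natDegree = 1 := by
  rw [s_eq, natDegree_X_sub_C]

private lemma s_irr : Irreducible (X + 1 : (ZMod 2)[X]) := by
  rw [s_eq]; exact irreducible_X_sub_C 1

private lemma s_ne_zero : (X + 1 : (ZMod 2)[X]) ≠ 0 := s_monic.ne_zero

/-- two monic irreducibles dividing each other are equal -/
private lemma irr_dvd_eq {p q : (ZMod 2)[X]} (hp : p.Monic) (hq : q.Monic)
    (hpi : Irreducible p) (hqi : Irreducible q) (h : p ∣ q) : p = q :=
  eq_of_monic_of_associated hp hq (hpi.associated_of_dvd hqi h)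

/-- if d divides (X+1)*p with p irreducible not dividing d, then d ∣ X+1 -/
private lemma dvd_s_of {p d : (ZMod 2)[X]} (hpi : Irreducible p)
    (hd : d ∣ (X + 1) * p) (hnd : ¬ p ∣ d) : d ∣ X + 1 := by
  have hcop : IsCoprime p d := (hpi.coprime_iff_not_dvd).2 hnd
  exact hcop.symm.dvd_of_dvd_mul_right hd

private lemma deg_le_one_of_dvd_s {d : (ZMod 2)[X]} (h : d ∣ X + 1) : d.natDegree ≤ 1 :=
  s_deg ▸ natDegree_le_of_dvd h s_ne_zero

/-- a monic irreducible with nonzero X-coefficient... : if it divides f with f ∣ d etc -/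
private lemma eval_ne {g : (ZMod 2)[X]} (hg : g.Monic) (hgi : Irreducible g) (hgx : g ≠ X) :
    g.eval 0 ≠ 0 := by
  intro h
  have hx : X ∣ g := X_dvd_iff.2 (by rw [coeff_zero_eq_eval_zero]; exact h)
  exact hgx ((irr_dvd_eq monic_X hg irreducible_X hgi hx).symm)

/-- Over `F_2` and for `n ≥ 2`, the set consisting of all monic irreducibles of degree `n`,
all products `(X+1)*g` with `g` monic irreducible of degree `n-1`, `g ≠ X`, together with
`(X+1)^n`, lies in `S_n` and any two distinct elements have gcd of degree at most `1`. -/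
theorem construction_pairwise_linear (n : ℕ) (hn : 2 ≤ n) (A : Set ((ZMod 2)[X]))
    (hA : A = {f | f.Monic ∧ Irreducible f ∧ f.natDegree = n}
      ∪ {f | ∃ g : (ZMod 2)[X], g.Monic ∧ Irreducible g ∧ g.natDegree = n - 1 ∧ g ≠ X ∧
          f = (X + 1) * g}
      ∪ {(X + 1) ^ n}) :
    (∀ f ∈ A, f.Monic ∧ f.natDegree = n ∧ f.eval 0 ≠ 0) ∧
      (∀ f ∈ A, ∀ g ∈ A, f ≠ g → (EuclideanDomain.gcd f g).natDegree ≤ 1) := by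
  subst hA
  -- helper facts about each kind of element used repeatedly
  have hprime : ∀ p : (ZMod 2)[X], Irreducible p → Prime p := fun p hp =>
    hp.prime
  -- key: if f is irreducible of degree n and d ∣ f and d ∣ g for the other elements
  constructor
  · rintro f ((⟨hm, hi, hd⟩ | ⟨g, hgm, hgi, hgd, hgx, rfl⟩) | hf)
    · refine ⟨hm, hd, ?_⟩
      intro h
      have hx : X ∣ f := X_dvd_iff.2 (by rw [coeff_zero_eq_eval_zero]; exact h)
      have := irr_dvd_eq monic_X hm irreducible_X hi hx
      rw [← this] at hd
      simp [natDegree_X] at hd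
      omega
    · refine ⟨s_monic.mul hgm, ?_, ?_⟩
      · rw [s_monic.natDegree_mul hgm, s_deg, hgd]; omega
      · simp only [eval_mul, eval_add, eval_X, eval_one, zero_add, one_mul]
        exact eval_ne hgm hgi hgx
    · simp only [Set.mem_singleton_iff] at hf
      subst hf
      refine ⟨s_monic.pow n, ?_, ?_⟩
      · rw [s_monic.natDegree_pow, s_deg, mul_one]
      · simp
  · -- pairwise gcd bound; reduce to a statement about common divisors
    suffices H : ∀ f ∈ ({f | f.Monic ∧ Irreducible f ∧ f.natDegree = n}
      ∪ {f | ∃ g : (ZMod 2)[X], g.Monic ∧ Irreducible g ∧ g.natDegree = n - 1 ∧ g ≠ X ∧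
          f = (X + 1) * g}
      ∪ {(X + 1) ^ n} : Set ((ZMod 2)[X])), ∀ g ∈ ({f | f.Monic ∧ Irreducible f ∧ f.natDegree = n}
      ∪ {f | ∃ g : (ZMod 2)[X], g.Monic ∧ Irreducible g ∧ g.natDegree = n - 1 ∧ g ≠ X ∧
          f = (X + 1) * g}
      ∪ {(X + 1) ^ n} : Set ((ZMod 2)[X])), f ≠ g →
        ∀ d : (ZMod 2)[X], d ∣ f → d ∣ g → d.natDegree ≤ 1 by
      intro f hf g hg hne
      exact H f hf g hg hne _ (EuclideanDomain.gcd_dvd_left f g)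
        (EuclideanDomain.gcd_dvd_right f g)
    -- case where the first element is irreducible of degree n
    have case1 : ∀ f : (ZMod 2)[X], f.Monic → Irreducible f → f.natDegree = n →
        ∀ g ∈ ({f | f.Monic ∧ Irreducible f ∧ f.natDegree = n}
          ∪ {f | ∃ g : (ZMod 2)[X], g.Monic ∧ Irreducible g ∧ g.natDegree = n - 1 ∧ g ≠ X ∧
              f = (X + 1) * g}
          ∪ {(X + 1) ^ n} : Set ((ZMod 2)[X])), f ≠ g →
        ∀ d : (ZMod 2)[X], d ∣ f → d ∣ g → d.natDegree ≤ 1 := by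
      intro f hfm hfi hfd g hg hne d hdf hdg
      -- d ∣ f irreducible: either unit or f ∣ d
      obtain ⟨c, hc⟩ := hdf
      rcases hfi.isUnit_or_isUnit hc with hu | hu
      · rw [natDegree_eq_zero_of_isUnit hu]; omega
      · -- f ∣ d, hence f ∣ g
        have hfd' : f ∣ d := by
          rw [hc]; exact (IsUnit.mul_right_dvd hu).2 dvd_rfl
        have hfg : f ∣ g := hfd'.trans hdg
        exfalso
        rcases hg with (⟨hgm, hgi, hgd⟩ | ⟨g', hg'm, hg'i, hg'd, hg'x, rfl⟩) | hg
        · exact hne (irr_dvd_eq hfm hgm hfi hgi hfg)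
        · rcases (hprime f hfi).2.2 _ _ hfg with h | h
          · have := natDegree_le_of_dvd h s_ne_zero
            rw [s_deg, hfd] at this; omega
          · have := irr_dvd_eq hfm hg'm hfi hg'i h
            rw [this, hg'd] at hfd; omega
        · simp only [Set.mem_singleton_iff] at hg; subst hg
          have : f ∣ X + 1 := (hprime f hfi).dvd_of_dvd_pow hfg
          have := natDegree_le_of_dvd this s_ne_zero
          rw [s_deg, hfd] at this; omega
    -- case where first element is (X+1)*g', second is (X+1)*g'' or (X+1)^n
    rintro f ((⟨hfm, hfi, hfd⟩ | ⟨g1, hg1m, hg1i, hg1d, hg1x, rfl⟩) | hf) g hg hne d hdf hdg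
    · exact case1 f hfm hfi hfd g hg hne d hdf hdg
    · rcases hg with (⟨hgm, hgi, hgd⟩ | ⟨g2, hg2m, hg2i, hg2d, hg2x, rfl⟩) | hg
      · exact case1 g hgm hgi hgd _ (Or.inl (Or.inr ⟨g1, hg1m, hg1i, hg1d, hg1x, rfl⟩))
          hne.symm d hdg hdf
      · -- (X+1)*g1 vs (X+1)*g2
        have hne' : g1 ≠ g2 := by rintro rfl; exact hne rfl
        by_cases h2 : g2 ∣ d
        · -- then g2 ∣ (X+1)*g1, so g2 ∣ X+1 (g2 = g1 impossible)
          have h2' : g2 ∣ (X + 1) * g1 := h2.trans hdf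
          rcases (hprime g2 hg2i).2.2 _ _ h2' with h | h
          · -- g2 = X+1; show ¬ g1 ∣ d then d ∣ X+1
            have hg2s : g2 = X + 1 := irr_dvd_eq hg2m s_monic hg2i s_irr h
            have h1 : ¬ g1 ∣ d := by
              intro h1
              have : g1 ∣ (X + 1) * g2 := h1.trans hdg
              rw [hg2s] at this
              have : g1 ∣ X + 1 := by
                rcases (hprime g1 hg1i).2.2 _ _ this with h' | h' <;> exact h'
              have := irr_dvd_eq hg1m s_monic hg1i s_irr this
              exact hne' (this.trans hg2s.symm)
            exact deg_le_one_of_dvd_s (dvd_s_of hg1i hdf h1)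
          · exact absurd (irr_dvd_eq hg2m hg1m hg2i hg1i h) hne'.symm
        · exact deg_le_one_of_dvd_s (dvd_s_of hg2i hdg h2)
      · -- (X+1)*g1 vs (X+1)^n
        simp only [Set.mem_singleton_iff] at hg; subst hg
        have h1 : ¬ g1 ∣ d := by
          intro h1
          have : g1 ∣ (X + 1) ^ n := h1.trans hdg
          have : g1 ∣ X + 1 := (hprime g1 hg1i).dvd_of_dvd_pow this
          have hg1s : g1 = X + 1 := irr_dvd_eq hg1m s_monic hg1i s_irr this
          have hn2 : n = 2 := by rw [hg1s, s_deg] at hg1d; omega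
          apply hne
          rw [hg1s, hn2, sq]
        exact deg_le_one_of_dvd_s (dvd_s_of hg1i hdf h1)
    · -- (X+1)^n vs others
      simp only [Set.mem_singleton_iff] at hf; subst hf
      rcases hg with (⟨hgm, hgi, hgd⟩ | ⟨g2, hg2m, hg2i, hg2d, hg2x, rfl⟩) | hg
      · exact case1 g hgm hgi hgd _ (Or.inr rfl) hne.symm d hdg hdf
      · have h2 : ¬ g2 ∣ d := by
          intro h2
          have : g2 ∣ (X + 1) ^ n := h2.trans hdf
          have : g2 ∣ X + 1 := (hprime g2 hg2i).dvd_of_dvd_pow this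
          have hg2s : g2 = X + 1 := irr_dvd_eq hg2m s_monic hg2i s_irr this
          have hn2 : n = 2 := by rw [hg2s, s_deg] at hg2d; omega
          apply hne
          rw [hg2s, hn2, sq]
        exact deg_le_one_of_dvd_s (dvd_s_of hg2i hdg h2)
      · simp only [Set.mem_singleton_iff] at hg; subst hg
        exact absurd rfl hne
end

section
/- Over F_2, let B ⊆ S_n consist of reducible polynomials such that any two distinct elements of B have gcd of degree at most 1. Define L(f) to be the lowest-degree irreducible factor of f if (x+1) ∤ f, and the lowest-degree irreducible factor of f/(x+1) if (x+1) | f (breaking ties lexicographically). Then L is injective on B. -/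
open Polynomial

/-- Over `F_2`, the map `L` sending a reducible `f ∈ S_n` to its lowest-degree irreducible
factor (of `f` if `(X+1) ∤ f`, of `f/(X+1)` otherwise) is injective on a family `B` of
reducible elements of `S_n` with pairwise gcd of degree at most `1`. -/
theorem L_injective (n : ℕ) (hn : 2 ≤ n) (B : Set ((ZMod 2)[X]))
    (hBS : ∀ f ∈ B, f.Monic ∧ f.natDegree = n ∧ f.eval 0 ≠ 0 ∧ ¬ Irreducible f)
    (hBp : ∀ f ∈ B, ∀ g ∈ B, f ≠ g → (EuclideanDomain.gcd f g).natDegree ≤ 1)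
    (L : (ZMod 2)[X] → (ZMod 2)[X])
    (hL1 : ∀ f ∈ B, ¬ ((X + 1) ∣ f) →
      Irreducible (L f) ∧ L f ∣ f ∧
        ∀ q : (ZMod 2)[X], Irreducible q → q ∣ f → (L f).natDegree ≤ q.natDegree)
    (hL2 : ∀ f ∈ B, (X + 1) ∣ f →
      Irreducible (L f) ∧ L f ∣ (f / (X + 1)) ∧
        ∀ q : (ZMod 2)[X], Irreducible q → q ∣ (f / (X + 1)) →
          (L f).natDegree ≤ q.natDegree) :
    Set.InjOn L B := by
  intro f hf g hg hfg
  by_contra hne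
  have hX1 : (X + 1 : (ZMod 2)[X]) ≠ 0 := by
    intro h
    have := congrArg (Polynomial.eval 0) h
    simp at this
  -- L h divides h for every h ∈ B
  have key : ∀ h ∈ B, L h ∣ h := by
    intro h hh
    by_cases hd : (X + 1 : (ZMod 2)[X]) ∣ h
    · obtain ⟨_, hdvd, _⟩ := hL2 h hh hd
      refine hdvd.trans ?_
      have hm := EuclideanDomain.mul_div_cancel' hX1 hd
      exact ⟨X + 1, ((mul_comm (h / (X + 1)) (X + 1)).trans hm).symm⟩
    · exact (hL1 h hh hd).2.1
  have hirr : Irreducible (L f) := by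
    by_cases hd : (X + 1 : (ZMod 2)[X]) ∣ f
    · exact (hL2 f hf hd).1
    · exact (hL1 f hf hd).1
  have hdvdf : L f ∣ f := key f hf
  have hdvdg : L f ∣ g := hfg ▸ key g hg
  have hgcd : L f ∣ EuclideanDomain.gcd f g := EuclideanDomain.dvd_gcd hdvdf hdvdg
  have hgcdne : EuclideanDomain.gcd f g ≠ 0 := by
    intro h
    rw [EuclideanDomain.gcd_eq_zero_iff] at h
    exact (hBS f hf).1.ne_zero h.1
  have hdeg1 : (L f).natDegree ≤ 1 :=
    le_trans (Polynomial.natDegree_le_of_dvd hgcd hgcdne) (hBp f hf g hg hne)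
  have hdegeq : (L f).natDegree = 1 := le_antisymm hdeg1 hirr.natDegree_pos
  -- L f = X + 1
  have hXndvd : ¬ (X : (ZMod 2)[X]) ∣ f := by
    rw [Polynomial.X_dvd_iff, Polynomial.coeff_zero_eq_eval_zero]
    exact (hBS f hf).2.2.1
  have hform := Polynomial.eq_X_add_C_of_natDegree_le_one hdeg1
  have hc1 : (L f).coeff 1 = 1 := by
    have h1 : (L f).coeff 1 ≠ 0 := by
      have h := Polynomial.leadingCoeff_ne_zero.mpr hirr.ne_zero
      rwa [Polynomial.leadingCoeff, hdegeq] at h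
    revert h1; generalize (L f).coeff 1 = a; revert a; decide
  have hLX1 : L f = X + 1 := by
    have hc0 : (L f).coeff 0 = 1 := by
      have h0 : (L f).coeff 0 ≠ 0 := by
        intro h0
        apply hXndvd
        have : L f = X := by rw [hform, hc1, h0]; simp
        exact this ▸ hdvdf
      revert h0; generalize (L f).coeff 0 = a; revert a; decide
    rw [hform, hc1, hc0]; simp
  -- hence (X+1)^2 divides both f and g
  have sq : ∀ h ∈ B, L h = X + 1 → (X + 1 : (ZMod 2)[X]) ^ 2 ∣ h := by
    intro h hh hLh
    by_cases hd : (X + 1 : (ZMod 2)[X]) ∣ h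
    · obtain ⟨_, hdvd, _⟩ := hL2 h hh hd
      rw [hLh] at hdvd
      have hm := EuclideanDomain.mul_div_cancel' hX1 hd
      obtain ⟨d, hdd⟩ := hdvd
      refine ⟨d, ?_⟩
      calc h = (X + 1) * (h / (X + 1)) := hm.symm
        _ = (X + 1) * ((X + 1) * d) := by rw [hdd]
        _ = (X + 1) ^ 2 * d := by ring
    · exact absurd (hLh ▸ (hL1 h hh hd).2.1) hd
  have hsf := sq f hf hLX1
  have hsg := sq g hg (hfg ▸ hLX1)
  have : ((X + 1 : (ZMod 2)[X]) ^ 2).natDegree ≤ 1 :=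
    le_trans (Polynomial.natDegree_le_of_dvd (EuclideanDomain.dvd_gcd hsf hsg) hgcdne)
      (hBp f hf g hg hne)
  have h2 : ((X + 1 : (ZMod 2)[X]) ^ 2).natDegree = 2 := by
    rw [Polynomial.natDegree_pow]
    have : (X + 1 : (ZMod 2)[X]).natDegree = 1 := by
      simpa using Polynomial.natDegree_X_add_C (1 : ZMod 2)
    omega
  omega
end

section
/- Over F_q, for n ≥ 2 and 1 ≤ i ≤ ⌊(n−1)/2⌋, there exists an injective map φ from the set of monic irreducible polynomials of degree i (excluding x) to the set of monic irreducible polynomials of degree n−i such that the products {g·φ(g)} are pairwise coprime elements of S_n and are pairwise coprime to all irreducible polynomials of degree n. -/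
/-!
Write `q = |F|` and `m = n - i`, so `1 ≤ i < m`. The polynomial `X ^ q ^ d - X` is separable, and
its monic irreducible factors are exactly the monic irreducibles of degree dividing `d`; comparing
degrees gives `d * (#irreducibles of degree d other than X) + 1 ≤ q ^ d` and
`q ^ d ≤ d * (#irreducibles of degree d) + ∑_{e ∣ d, e < d} q ^ e`. An elementary estimate
turns these into `#(degree i, ≠ X) ≤ #(degree m)`, so an injection `φ` exists. The polynomials
`g`, `φ g` and `p` then have the distinct degrees `i < m < n`, and all coprimality claims reduce
to distinct monic irreducibles being coprime.
-/

open Polynomial UniqueFactorizationMonoid Finset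

namespace Nat

theorem sum_Icc_pow_add_two_le {q : ℕ} (hq : 2 ≤ q) (k : ℕ) :
    ∑ e ∈ Icc 1 k, q ^ e + 2 ≤ 2 * q ^ k := by
  induction k with
  | zero => simp
  | succ k ih =>
    rw [sum_Icc_succ_top (by omega), pow_succ]
    nlinarith [Nat.one_le_pow k q (by omega)]

theorem properDivisors_subset_Icc_div_two (n : ℕ) :
    n.properDivisors ⊆ Icc 1 (n / 2) := by
  intro e he
  obtain ⟨⟨c, rfl⟩, hlt⟩ := Nat.mem_properDivisors.mp he
  have hc : 2 ≤ c := by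
    by_contra! hc
    interval_cases c <;> omega
  rw [mem_Icc, Nat.le_div_iff_mul_le two_pos]
  exact ⟨Nat.pos_of_mem_properDivisors he, Nat.mul_le_mul_left e hc⟩

theorem mul_pow_add_le_mul_pow_add {q a b : ℕ} (hq : 2 ≤ q) (ha : 1 ≤ a) (hab : a ≤ b) :
    b * q ^ a + a ≤ a * q ^ b + b := by
  induction b, hab using Nat.le_induction with
  | base => rfl
  | succ b hab ih =>
    have h₁ : q ^ a ≤ q ^ b := Nat.pow_le_pow_right (by omega) hab
    have h₂ : q ^ b ≤ a * q ^ b := Nat.le_mul_of_pos_left _ ha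
    have h₃ : a * q ^ b * 2 ≤ a * q ^ b * q := Nat.mul_le_mul_left _ hq
    rw [pow_succ]
    linarith

-- Equality holds at `q = m = 2`; from `m = 5` on, `q ^ (m / 2) ≤ q ^ (m - 3)` leaves enough room.
theorem pred_mul_pow_add_le {q m T : ℕ} (hq : 2 ≤ q) (hm : 2 ≤ m)
    (hT : T + 2 ≤ 2 * q ^ (m / 2)) :
    m * q ^ (m - 1) + (m - 1) * T ≤ (m - 1) * q ^ m + m := by
  obtain h | h : m ≤ 4 ∨ 5 ≤ m := by omega
  · obtain ⟨r, rfl⟩ : ∃ r, q = r + 2 := ⟨q - 2, by omega⟩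
    interval_cases m <;> simp only [Nat.reduceDiv, Nat.reduceSub, pow_one] at hT ⊢ <;>
      nlinarith [Nat.zero_le (r ^ 3), Nat.zero_le (r ^ 4)]
  · obtain ⟨j, rfl⟩ : ∃ j, m = j + 3 := ⟨m - 3, by omega⟩
    have hk : q ^ ((j + 3) / 2) ≤ q ^ j := Nat.pow_le_pow_right (by omega) (by omega)
    have hcoef : (j + 3) * q ^ 2 + 2 * (j + 2) ≤ (j + 2) * q ^ 3 := by
      have h₁ : 4 ≤ q ^ 2 := by nlinarith
      have h₂ : (j + 2) * q ^ 2 * 2 ≤ (j + 2) * q ^ 2 * q := Nat.mul_le_mul_left _ hq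
      have h₃ : (j + 1) * 4 ≤ (j + 1) * q ^ 2 := Nat.mul_le_mul_left _ h₁
      nlinarith [show q ^ 3 = q ^ 2 * q by ring]
    have := Nat.mul_le_mul_right (q ^ j) hcoef
    simp only [show j + 3 - 1 = j + 2 by omega] at hT ⊢
    nlinarith [show q ^ (j + 2) = q ^ j * q ^ 2 by ring, show q ^ (j + 3) = q ^ j * q ^ 3 by ring]

theorem mul_pow_add_mul_le {q i m T : ℕ} (hq : 2 ≤ q) (hi : 1 ≤ i) (him : i < m)
    (hT : T + 2 ≤ 2 * q ^ (m / 2)) :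
    m * q ^ i + i * T ≤ i * q ^ m + m := by
  have h₁ := mul_pow_add_le_mul_pow_add hq hi (show i ≤ m - 1 by omega)
  have h₂ := pred_mul_pow_add_le hq (show 2 ≤ m by omega) hT
  have : (m - 1) * (m * q ^ i + i * T) ≤ (m - 1) * (i * q ^ m + m) := by
    nlinarith
  exact Nat.le_of_mul_le_mul_left this (by omega)

end Nat

theorem Finset.exists_mapsTo_injOn_of_card_le {α β : Type*} [Nonempty β] {s : Finset α}
    {t : Finset β} (h : #s ≤ #t) : ∃ f : α → β, Set.MapsTo f s t ∧ Set.InjOn f s :=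
  s.finite_toSet.exists_injOn_of_encard_le (t := (t : Set β)) (by
    simpa only [Set.encard_coe_eq_coe_finsetCard, Nat.cast_le] using h)

namespace Polynomial
variable (F : Type*) [Field F] [Finite F]

-- The monic irreducible factors of `X ^ q ^ d - X`; taking them as normalized factors makes the
-- set of monic irreducibles of a given degree a `Finset`.
noncomputable def monicIrreduciblesOfDegreeDvd (d : ℕ) : Finset F[X] :=
  open Classical in (normalizedFactors (X ^ Nat.card F ^ d - X : F[X])).toFinset

noncomputable def monicIrreduciblesOfDegree (d : ℕ) : Finset F[X] :=
  open Classical in (monicIrreduciblesOfDegreeDvd F d).filter (·.natDegree = d)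

variable {F}

theorem X_pow_natCard_pow_sub_X_ne_zero {d : ℕ} (hd : d ≠ 0) :
    (X ^ Nat.card F ^ d - X : F[X]) ≠ 0 :=
  FiniteField.X_pow_card_pow_sub_X_ne_zero F hd Finite.one_lt_card

theorem separable_X_pow_natCard_pow_sub_X {d : ℕ} (hd : d ≠ 0) :
    (X ^ Nat.card F ^ d - X : F[X]).Separable := by
  have := Fintype.ofFinite F
  refine galois_poly_separable (ringChar F) _ (ringChar.dvd ?_)
  rw [Nat.cast_pow, Nat.card_eq_fintype_card, Nat.cast_card_eq_zero, zero_pow hd]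

theorem mem_monicIrreduciblesOfDegreeDvd {d : ℕ} (hd : d ≠ 0) {g : F[X]} :
    g ∈ monicIrreduciblesOfDegreeDvd F d ↔ g.Monic ∧ Irreducible g ∧ g.natDegree ∣ d := by
  classical
  rw [monicIrreduciblesOfDegreeDvd, Multiset.mem_toFinset,
    Polynomial.mem_normalizedFactors_iff (X_pow_natCard_pow_sub_X_ne_zero hd)]
  constructor
  · rintro ⟨hirr, hmon, hdvd⟩
    exact ⟨hmon, hirr, hirr.natDegree_dvd_iff_dvd_X_pow_card_pow_sub_X.mpr hdvd⟩
  · rintro ⟨hmon, hirr, hdvd⟩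
    exact ⟨hirr, hmon, hirr.natDegree_dvd_iff_dvd_X_pow_card_pow_sub_X.mp hdvd⟩

theorem mem_monicIrreduciblesOfDegree {d : ℕ} {g : F[X]} :
    g ∈ monicIrreduciblesOfDegree F d ↔ g.Monic ∧ Irreducible g ∧ g.natDegree = d := by
  rcases eq_or_ne d 0 with rfl | hd
  · simp only [monicIrreduciblesOfDegree, monicIrreduciblesOfDegreeDvd, pow_zero, pow_one,
      sub_self, normalizedFactors_zero, Multiset.toFinset_zero, filter_empty,
      notMem_empty, false_iff, not_and]
    exact fun _ hirr => hirr.natDegree_pos.ne'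
  · rw [monicIrreduciblesOfDegree, mem_filter, mem_monicIrreduciblesOfDegreeDvd hd]
    constructor
    · rintro ⟨⟨hmon, hirr, -⟩, hdeg⟩
      exact ⟨hmon, hirr, hdeg⟩
    · rintro ⟨hmon, hirr, hdeg⟩
      exact ⟨⟨hmon, hirr, hdeg ▸ dvd_rfl⟩, hdeg⟩

theorem mem_erase_X_monicIrreduciblesOfDegree [DecidableEq F] {d : ℕ} {g : F[X]} :
    g ∈ (monicIrreduciblesOfDegree F d).erase X ↔
      g.Monic ∧ Irreducible g ∧ g.natDegree = d ∧ g ≠ X := by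
  rw [mem_erase, mem_monicIrreduciblesOfDegree]
  tauto

theorem sum_natDegree_monicIrreduciblesOfDegreeDvd {d : ℕ} (hd : d ≠ 0) :
    ∑ g ∈ monicIrreduciblesOfDegreeDvd F d, g.natDegree = Nat.card F ^ d := by
  classical
  set f : F[X] := X ^ Nat.card F ^ d - X
  have hf : f ≠ 0 := X_pow_natCard_pow_sub_X_ne_zero hd
  have hnodup : (normalizedFactors f).Nodup :=
    (squarefree_iff_nodup_normalizedFactors hf).mp
      (separable_X_pow_natCard_pow_sub_X hd).squarefree
  have hmonic : ∀ g ∈ normalizedFactors f, g.Monic := fun g hg =>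
    ((Polynomial.mem_normalizedFactors_iff hf).mp hg).2.1
  calc ∑ g ∈ monicIrreduciblesOfDegreeDvd F d, g.natDegree
      = ((normalizedFactors f).map natDegree).sum := by
        rw [monicIrreduciblesOfDegreeDvd, sum_eq_multiset_sum, Multiset.toFinset_val,
          hnodup.dedup]
    _ = (C f.leadingCoeff * (normalizedFactors f).prod).natDegree := by
        rw [natDegree_C_mul (leadingCoeff_ne_zero.mpr hf),
          natDegree_multiset_prod_of_monic _ hmonic]
    _ = Nat.card F ^ d := by
        rw [leadingCoeff_mul_prod_normalizedFactors,
          FiniteField.X_pow_card_pow_sub_X_natDegree_eq F hd Finite.one_lt_card]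

theorem mul_card_monicIrreduciblesOfDegree_erase_X_add_one_le [DecidableEq F] {d : ℕ}
    (hd : d ≠ 0) :
    d * #((monicIrreduciblesOfDegree F d).erase X) + 1 ≤ Nat.card F ^ d := by
  have hX : X ∈ monicIrreduciblesOfDegreeDvd F d :=
    (mem_monicIrreduciblesOfDegreeDvd hd).mpr ⟨monic_X, irreducible_X, by simp⟩
  have hsub : (monicIrreduciblesOfDegree F d).erase X ⊆
      (monicIrreduciblesOfDegreeDvd F d).erase X :=
    erase_subset_erase _ (filter_subset _ _)
  calc d * #((monicIrreduciblesOfDegree F d).erase X) + 1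
      = ∑ g ∈ (monicIrreduciblesOfDegree F d).erase X, g.natDegree + (X : F[X]).natDegree := by
        rw [natDegree_X, sum_const_nat fun g hg =>
          (mem_monicIrreduciblesOfDegree.mp (mem_of_mem_erase hg)).2.2, mul_comm]
    _ ≤ ∑ g ∈ (monicIrreduciblesOfDegreeDvd F d).erase X, g.natDegree + natDegree X :=
        Nat.add_le_add_right (sum_le_sum_of_subset hsub) _
    _ = Nat.card F ^ d := by
        rw [sum_erase_add _ _ hX, sum_natDegree_monicIrreduciblesOfDegreeDvd hd]

theorem pow_card_le_mul_card_monicIrreduciblesOfDegree_add {d : ℕ} (hd : d ≠ 0) :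
    Nat.card F ^ d ≤
      d * #(monicIrreduciblesOfDegree F d) + ∑ e ∈ d.properDivisors, Nat.card F ^ e := by
  classical
  set D := monicIrreduciblesOfDegreeDvd F d
  have hfiber : ∀ e ∈ d.properDivisors,
      ∑ g ∈ D with g.natDegree = e, g.natDegree ≤ Nat.card F ^ e := by
    intro e he
    have he0 : e ≠ 0 := (Nat.pos_of_mem_properDivisors he).ne'
    rw [← sum_natDegree_monicIrreduciblesOfDegreeDvd he0]
    refine sum_le_sum_of_subset fun g hg => ?_
    obtain ⟨hgD, hdeg⟩ := mem_filter.mp hg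
    obtain ⟨hmon, hirr, -⟩ := (mem_monicIrreduciblesOfDegreeDvd hd).mp hgD
    exact (mem_monicIrreduciblesOfDegreeDvd he0).mpr ⟨hmon, hirr, hdeg ▸ dvd_rfl⟩
  have htop :
      ∑ g ∈ D with g.natDegree = d, g.natDegree = d * #(monicIrreduciblesOfDegree F d) := by
    rw [sum_const_nat fun g hg => (mem_filter.mp hg).2, mul_comm]
    rfl
  calc Nat.card F ^ d = ∑ e ∈ d.divisors, ∑ g ∈ D with g.natDegree = e, g.natDegree := by
        rw [sum_fiberwise_of_maps_to fun g hg => Nat.mem_divisors.mpr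
          ⟨((mem_monicIrreduciblesOfDegreeDvd hd).mp hg).2.2, hd⟩,
          sum_natDegree_monicIrreduciblesOfDegreeDvd hd]
    _ ≤ d * #(monicIrreduciblesOfDegree F d) + ∑ e ∈ d.properDivisors, Nat.card F ^ e := by
        rw [← Nat.cons_self_properDivisors hd, sum_cons, htop]
        exact Nat.add_le_add_left (sum_le_sum hfiber) _

theorem card_monicIrreduciblesOfDegree_erase_X_le [DecidableEq F] {i m : ℕ} (hi : 1 ≤ i)
    (him : i < m) :
    #((monicIrreduciblesOfDegree F i).erase X) ≤ #(monicIrreduciblesOfDegree F m) := by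
  set q := Nat.card F
  set a := #((monicIrreduciblesOfDegree F i).erase X)
  set b := #(monicIrreduciblesOfDegree F m)
  set T := ∑ e ∈ Icc 1 (m / 2), q ^ e
  have hq : 2 ≤ q := Finite.one_lt_card
  have ha : i * a + 1 ≤ q ^ i := mul_card_monicIrreduciblesOfDegree_erase_X_add_one_le (by omega)
  have hb : q ^ m ≤ m * b + T :=
    (pow_card_le_mul_card_monicIrreduciblesOfDegree_add (by omega)).trans
      (Nat.add_le_add_left (sum_le_sum_of_subset (Nat.properDivisors_subset_Icc_div_two m)) _)
  have key : m * q ^ i + i * T ≤ i * q ^ m + m :=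
    Nat.mul_pow_add_mul_le hq hi him (Nat.sum_Icc_pow_add_two_le hq (m / 2))
  have : i * m * a ≤ i * m * b := by
    nlinarith [Nat.mul_le_mul_left m ha, Nat.mul_le_mul_left i hb]
  exact Nat.le_of_mul_le_mul_left this (Nat.mul_pos (by omega) (by omega))

section Field

variable {K : Type*} [Field K]

theorem _root_.Irreducible.isCoprime_of_natDegree_ne {g h : K[X]} (hg : Irreducible g)
    (hh : Irreducible h) (hne : g.natDegree ≠ h.natDegree) : IsCoprime g h :=
  hg.coprime_iff_not_dvd.mpr fun hdvd =>
    hne <| natDegree_eq_of_degree_eq <|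
      degree_eq_degree_of_associated (hg.associated_of_dvd hh hdvd)

theorem Monic.isCoprime_of_irreducible_of_ne {g h : K[X]} (hg : g.Monic) (hh : h.Monic)
    (hgi : Irreducible g) (hhi : Irreducible h) (hne : g ≠ h) : IsCoprime g h :=
  hgi.coprime_iff_not_dvd.mpr fun hdvd =>
    hne (eq_of_monic_of_associated hg hh (hgi.associated_of_dvd hhi hdvd))

theorem Monic.eval_zero_ne_zero_of_irreducible_of_ne_X {g : K[X]} (hg : g.Monic)
    (hgi : Irreducible g) (hne : g ≠ X) : g.eval 0 ≠ 0 := by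
  rw [← coeff_zero_eq_eval_zero, Ne, ← X_dvd_iff]
  exact fun hdvd => hne (eq_of_monic_of_associated monic_X hg
    (irreducible_X.associated_of_dvd hgi hdvd)).symm

end Field

end Polynomial

theorem pairing_construction_general (F : Type*) [Field F] [Fintype F] (n i : ℕ)
    (hi1 : 1 ≤ i) (hi2 : i ≤ (n - 1) / 2) :
    ∃ φ : F[X] → F[X],
      (∀ g ∈ {g : F[X] | g.Monic ∧ Irreducible g ∧ g.natDegree = i ∧ g ≠ X},
        (φ g).Monic ∧ Irreducible (φ g) ∧ (φ g).natDegree = n - i) ∧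
      Set.InjOn φ {g : F[X] | g.Monic ∧ Irreducible g ∧ g.natDegree = i ∧ g ≠ X} ∧
      (∀ g ∈ {g : F[X] | g.Monic ∧ Irreducible g ∧ g.natDegree = i ∧ g ≠ X},
        (g * φ g).Monic ∧ (g * φ g).natDegree = n ∧ (g * φ g).eval 0 ≠ 0) ∧
      (∀ g ∈ {g : F[X] | g.Monic ∧ Irreducible g ∧ g.natDegree = i ∧ g ≠ X},
        ∀ g' ∈ {g : F[X] | g.Monic ∧ Irreducible g ∧ g.natDegree = i ∧ g ≠ X},
          g ≠ g' → IsCoprime (g * φ g) (g' * φ g')) ∧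
      (∀ g ∈ {g : F[X] | g.Monic ∧ Irreducible g ∧ g.natDegree = i ∧ g ≠ X},
        ∀ p : F[X], p.Monic → Irreducible p → p.natDegree = n →
          IsCoprime (g * φ g) p) := by
  classical
  have hS : {g : F[X] | g.Monic ∧ Irreducible g ∧ g.natDegree = i ∧ g ≠ X} =
      ↑((monicIrreduciblesOfDegree F i).erase X) :=
    Set.ext fun _ => mem_erase_X_monicIrreduciblesOfDegree.symm
  obtain ⟨φ, hφ, hinj⟩ := Finset.exists_mapsTo_injOn_of_card_le
    (card_monicIrreduciblesOfDegree_erase_X_le (F := F) hi1 (show i < n - i by omega))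
  rw [hS]
  have hφS (g) (hg : g ∈ ((monicIrreduciblesOfDegree F i).erase X : Set F[X])) :
      (φ g).Monic ∧ Irreducible (φ g) ∧ (φ g).natDegree = n - i :=
    mem_monicIrreduciblesOfDegree.mp (hφ hg)
  refine ⟨φ, hφS, hinj, fun g hg => ?_, fun g hg g' hg' hne => ?_,
    fun g hg p _ hpi hpd => ?_⟩
  all_goals obtain ⟨hm, hirr, hd⟩ := hφS g hg
  all_goals obtain ⟨hgm, hgi, hgd, hgX⟩ := mem_erase_X_monicIrreduciblesOfDegree.mp hg
  · have hX : φ g ≠ X := ne_of_apply_ne natDegree (by rw [hd, natDegree_X]; omega)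
    refine ⟨hgm.mul hm, by rw [natDegree_mul hgi.ne_zero hirr.ne_zero, hgd, hd]; omega, ?_⟩
    rw [eval_mul]
    exact mul_ne_zero (hgm.eval_zero_ne_zero_of_irreducible_of_ne_X hgi hgX)
      (hm.eval_zero_ne_zero_of_irreducible_of_ne_X hirr hX)
  · obtain ⟨hm', hirr', hd'⟩ := hφS g' hg'
    obtain ⟨hgm', hgi', hgd', -⟩ := mem_erase_X_monicIrreduciblesOfDegree.mp hg'
    exact .mul_left (.mul_right (hgm.isCoprime_of_irreducible_of_ne hgm' hgi hgi' hne)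
        (hgi.isCoprime_of_natDegree_ne hirr' (by omega)))
      (.mul_right (hirr.isCoprime_of_natDegree_ne hgi' (by omega))
        (hm.isCoprime_of_irreducible_of_ne hm' hirr hirr' fun h => hne (hinj hg hg' h)))
  · exact .mul_left (hgi.isCoprime_of_natDegree_ne hpi (by omega))
      (hirr.isCoprime_of_natDegree_ne hpi (by omega))

/-- Over a finite field, for `n ≥ 2` and `1 ≤ i ≤ ⌊(n-1)/2⌋`, there is an injective map
`φ` from the monic irreducibles of degree `i` (excluding `X`) to the monic irreducibles of
degree `n - i` such that the products `g * φ g` lie in `S_n`, are pairwise coprime, and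
are coprime to all irreducible polynomials of degree `n`. -/
theorem pairing_construction (F : Type*) [Field F] [Fintype F] (n i : ℕ) (hn : 2 ≤ n)
    (hi1 : 1 ≤ i) (hi2 : i ≤ (n - 1) / 2) :
    ∃ φ : F[X] → F[X],
      (∀ g ∈ {g : F[X] | g.Monic ∧ Irreducible g ∧ g.natDegree = i ∧ g ≠ X},
        (φ g).Monic ∧ Irreducible (φ g) ∧ (φ g).natDegree = n - i) ∧
      Set.InjOn φ {g : F[X] | g.Monic ∧ Irreducible g ∧ g.natDegree = i ∧ g ≠ X} ∧
      (∀ g ∈ {g : F[X] | g.Monic ∧ Irreducible g ∧ g.natDegree = i ∧ g ≠ X},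
        (g * φ g).Monic ∧ (g * φ g).natDegree = n ∧ (g * φ g).eval 0 ≠ 0) ∧
      (∀ g ∈ {g : F[X] | g.Monic ∧ Irreducible g ∧ g.natDegree = i ∧ g ≠ X},
        ∀ g' ∈ {g : F[X] | g.Monic ∧ Irreducible g ∧ g.natDegree = i ∧ g ≠ X},
          g ≠ g' → IsCoprime (g * φ g) (g' * φ g')) ∧
      (∀ g ∈ {g : F[X] | g.Monic ∧ Irreducible g ∧ g.natDegree = i ∧ g ≠ X},
        ∀ p : F[X], p.Monic → Irreducible p → p.natDegree = n →
          IsCoprime (g * φ g) p) :=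
  pairing_construction_general F n i hi1 hi2
end

section
/- Over F_q, there exists a family R ⊆ S_n such that any two distinct elements of R have gcd of degree at most d (for 1 ≤ d < n/2), with |R| ≥ (Σ_{i=1}^{⌊n/2⌋} I_i) + (Σ_{i=n−d}^{n−1} I_i) + I_n, where I_k is the number of monic irreducible polynomials of degree k over F_q with nonzero constant term. -/
open Polynomial

/-- `Icnt F k` is the number of monic irreducible polynomials of degree `k` over `F`
with nonzero constant term. -/
noncomputable def Icnt (F : Type*) [Field F] (k : ℕ) : ℕ :=
  Set.ncard {f : F[X] | f.Monic ∧ Irreducible f ∧ f.natDegree = k ∧ f.eval 0 ≠ 0}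

/-!
Each monic irreducible `P` of degree `i ≤ n / 2` or `i ≥ n - d` (with nonzero constant
term) is sent to a polynomial of degree `n` whose irreducible factors other than `ℓ = X - 1`
are `P` and possibly one partner `φ P` of degree `n - i ∈ (n / 2, n - d)`, and in which `ℓ`
occurs at most `d` times: `P ^ ⌊n / i⌋ ℓ ^ (n mod i)` for `i ≤ d`, `P ℓ ^ (n - i)` for
`i ≥ n - d`, `P ^ 2` for `2 i = n`, and `P φ(P)` for `d < i < n / 2`. Two such
polynomials then share no irreducible factor except `ℓ`, so their gcd divides a power `ℓ ^ e`
with `e ≤ d`.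

The partner map must be injective, which needs `I_i ≤ I_(n-i)` for `2 ≤ i < n - i`. This
monotonicity follows from Gauss's formula `q ^ m = ∑_{k ∣ m} k N_k` (`N_k` the number of
monic irreducibles of degree `k`), through `i N_i ≤ q ^ i` and
`q ^ m ≤ m N_m + ∑_{t ≤ m / 2} q ^ t`.
-/

open UniqueFactorizationMonoid Finset

namespace Polynomial

theorem eval_zero_ne_zero_of_irreducible {R : Type*} [CommRing R] [IsDomain R] {f : R[X]}
    (hf : Irreducible f) (hdeg : f.natDegree ≠ 1) : f.eval 0 ≠ 0 := by
  intro h0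
  have hX : X ∣ f := X_dvd_iff.2 (by rwa [coeff_zero_eq_eval_zero])
  have hassoc := irreducible_X.associated_of_dvd hf hX
  exact hdeg (by rw [← natDegree_eq_of_degree_eq (degree_eq_degree_of_associated hassoc),
    natDegree_X])

theorem isCoprime_of_monic_of_irreducible_of_ne {K : Type*} [Field K] {p r : K[X]}
    (hp : p.Monic) (hpi : Irreducible p) (hr : r.Monic) (hri : Irreducible r) (hne : p ≠ r) :
    IsCoprime p r :=
  hpi.coprime_iff_not_dvd.2 fun h =>
    hne (eq_of_monic_of_associated hp hr (hpi.associated_of_dvd hri h))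

def monicIrreducibles (K : Type*) [Field K] (k : ℕ) : Set K[X] :=
  {f | f.Monic ∧ Irreducible f ∧ f.natDegree = k}

end Polynomial

theorem Nat.properDivisors_subset_Icc (n : ℕ) : n.properDivisors ⊆ Icc 1 (n / 2) := by
  intro k hk
  obtain ⟨⟨c, rfl⟩, hlt⟩ := Nat.mem_properDivisors.1 hk
  have hk0 := Nat.pos_of_mem_properDivisors hk
  have hc : 2 ≤ c := by
    rcases Nat.lt_or_ge c 2 with h | h
    · interval_cases c <;> simp_all
    · exact h
  rw [mem_Icc, Nat.le_div_iff_mul_le two_pos]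
  exact ⟨hk0, Nat.mul_le_mul_left k hc⟩

theorem Nat.succ_mul_pow_add_mul_sum_le {q i : ℕ} (hq : 2 ≤ q) (hi : 2 ≤ i)
    (hqi : q = 2 → i ≠ 3) :
    (i + 1) * q ^ i + i * ∑ t ∈ Icc 1 ((i + 1) / 2), q ^ t ≤ i * q ^ (i + 1) := by
  obtain rfl | rfl | hi4 : i = 2 ∨ i = 3 ∨ 4 ≤ i := by omega
  · simp only [Nat.reduceAdd, Nat.reduceDiv, Icc_self, sum_singleton, pow_one]
    nlinarith
  · have hq3 : 3 ≤ q := by omega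
    simp only [Nat.reduceAdd, Nat.reduceDiv, sum_Icc_succ_top (by norm_num : 1 ≤ 1 + 1),
      Icc_self, sum_singleton]
    nlinarith [pow_le_pow_left₀ (by omega : 0 ≤ 3) hq3 3]
  · obtain ⟨j, rfl⟩ : ∃ j, i = j + 1 := ⟨i - 1, by omega⟩
    have hS : ∑ t ∈ Icc 1 ((j + 1 + 1) / 2), q ^ t < q ^ j :=
      Nat.geomSum_lt hq fun t ht => by rw [mem_Icc] at ht; omega
    have key : (j + 2) * q + (j + 1) ≤ (j + 1) * q * q := by
      nlinarith [Nat.mul_le_mul_left ((j + 1) * q) hq, Nat.mul_le_mul_left j hq]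
    have := Nat.mul_le_mul_left (q ^ j) key
    have := Nat.mul_le_mul_left (j + 1) hS.le
    rw [pow_succ q (j + 1), pow_succ q j]
    nlinarith

namespace FiniteField

variable {F : Type*} [Field F] [Fintype F]

theorem separable_X_pow_card_pow_sub_X {m : ℕ} (hm : m ≠ 0) :
    (X ^ Fintype.card F ^ m - X : F[X]).Separable :=
  galois_poly_separable (ringChar F) _ <|
    dvd_pow ((ringChar.spec F _).1 (cast_card_eq_zero F)) hm

theorem mem_normalizedFactors_X_pow_card_pow_sub_X [DecidableEq F] {m : ℕ} (hm : m ≠ 0)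
    {g : F[X]} :
    g ∈ normalizedFactors (X ^ Fintype.card F ^ m - X : F[X]) ↔
      g.Monic ∧ Irreducible g ∧ g.natDegree ∣ m := by
  rw [Polynomial.mem_normalizedFactors_iff
    (X_pow_card_pow_sub_X_ne_zero F hm Fintype.one_lt_card), ← Nat.card_eq_fintype_card]
  constructor
  · rintro ⟨hg, hgm, hdvd⟩
    exact ⟨hgm, hg, hg.natDegree_dvd_iff_dvd_X_pow_card_pow_sub_X.2 hdvd⟩
  · rintro ⟨hgm, hg, hdvd⟩
    exact ⟨hg, hgm, hg.natDegree_dvd_iff_dvd_X_pow_card_pow_sub_X.1 hdvd⟩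

theorem monicIrreducibles_finite (k : ℕ) : (monicIrreducibles F k).Finite := by
  classical
  rcases eq_or_ne k 0 with rfl | hk
  · refine Set.finite_empty.subset fun f ⟨hfm, hf, hdeg⟩ => ?_
    exact hf.not_isUnit (eq_one_of_monic_natDegree_zero hfm hdeg ▸ isUnit_one)
  · refine (normalizedFactors (X ^ Fintype.card F ^ k - X : F[X])).toFinset.finite_toSet.subset
      ?_
    rintro f ⟨hfm, hf, rfl⟩
    rw [mem_coe, Multiset.mem_toFinset, mem_normalizedFactors_X_pow_card_pow_sub_X hk]
    exact ⟨hfm, hf, dvd_rfl⟩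

/-- The monic irreducible factors of the squarefree polynomial `X ^ q ^ m - X` are exactly those
of degree dividing `m`. -/
theorem sum_divisors_mul_ncard_monicIrreducibles {m : ℕ} (hm : m ≠ 0) :
    ∑ k ∈ m.divisors, k * (monicIrreducibles F k).ncard = Fintype.card F ^ m := by
  classical
  set f : F[X] := X ^ Fintype.card F ^ m - X
  have hf : f ≠ 0 := X_pow_card_pow_sub_X_ne_zero F hm Fintype.one_lt_card
  have hfm : f.Monic := monic_X_pow_sub <| by
    rw [degree_X]; exact_mod_cast Nat.one_lt_pow hm Fintype.one_lt_card
  let T : Finset F[X] := ⟨normalizedFactors f,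
    (squarefree_iff_nodup_normalizedFactors hf).1 (separable_X_pow_card_pow_sub_X hm).squarefree⟩
  have hT : ∀ g, g ∈ T ↔ g.Monic ∧ Irreducible g ∧ g.natDegree ∣ m := fun g =>
    mem_normalizedFactors_X_pow_card_pow_sub_X hm
  have hprod : (normalizedFactors f).prod = f := by
    refine eq_of_monic_of_associated ?_ hfm (prod_normalizedFactors hf)
    simpa only [Multiset.map_id] using
      monic_multiset_prod_of_monic (normalizedFactors f) id fun g hg => ((hT g).1 hg).1
  have hfiber : ∀ k ∈ m.divisors, monicIrreducibles F k = ↑(T.filter (·.natDegree = k)) := by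
    intro k hk
    ext g
    simp only [monicIrreducibles, Set.mem_ofPred_eq, coe_filter, hT]
    constructor
    · rintro ⟨hgm, hg, rfl⟩
      exact ⟨⟨hgm, hg, Nat.dvd_of_mem_divisors hk⟩, rfl⟩
    · rintro ⟨⟨hgm, hg, -⟩, rfl⟩
      exact ⟨hgm, hg, rfl⟩
  calc ∑ k ∈ m.divisors, k * (monicIrreducibles F k).ncard
      = ∑ k ∈ m.divisors, ∑ g ∈ T with g.natDegree = k, g.natDegree := by
        refine sum_congr rfl fun k hk => ?_
        rw [hfiber k hk, Set.ncard_coe_finset,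
          sum_const_nat fun g hg => (mem_filter.1 hg).2, mul_comm]
    _ = ∑ g ∈ T, g.natDegree :=
        sum_fiberwise_of_maps_to (fun g hg => Nat.mem_divisors.2 ⟨((hT g).1 hg).2.2, hm⟩) _
    _ = f.natDegree := by
        rw [← hprod, natDegree_multiset_prod_of_monic _ fun g hg => ((hT g).1 hg).1]
        rfl
    _ = Fintype.card F ^ m := X_pow_card_pow_sub_X_natDegree_eq F hm Fintype.one_lt_card

theorem mul_ncard_monicIrreducibles_le {k : ℕ} (hk : k ≠ 0) :
    k * (monicIrreducibles F k).ncard ≤ Fintype.card F ^ k :=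
  calc k * (monicIrreducibles F k).ncard
      ≤ ∑ j ∈ k.divisors, j * (monicIrreducibles F j).ncard :=
        single_le_sum (f := fun j => j * (monicIrreducibles F j).ncard)
          (fun _ _ => Nat.zero_le _) (Nat.mem_divisors_self k hk)
    _ = Fintype.card F ^ k := sum_divisors_mul_ncard_monicIrreducibles hk

theorem pow_card_le_mul_ncard_monicIrreducibles_add {m : ℕ} (hm : m ≠ 0) :
    Fintype.card F ^ m ≤
      m * (monicIrreducibles F m).ncard + ∑ t ∈ Icc 1 (m / 2), Fintype.card F ^ t := by
  rw [← sum_divisors_mul_ncard_monicIrreducibles hm, ← Nat.cons_self_properDivisors hm,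
    sum_cons]
  gcongr
  calc ∑ k ∈ m.properDivisors, k * (monicIrreducibles F k).ncard
      ≤ ∑ k ∈ m.properDivisors, Fintype.card F ^ k :=
        sum_le_sum fun k hk =>
          mul_ncard_monicIrreducibles_le (Nat.pos_of_mem_properDivisors hk).ne'
    _ ≤ ∑ t ∈ Icc 1 (m / 2), Fintype.card F ^ t :=
        sum_le_sum_of_subset (Nat.properDivisors_subset_Icc m)

theorem ncard_monicIrreducibles_le_succ {i : ℕ} (hi : 2 ≤ i) :
    (monicIrreducibles F i).ncard ≤ (monicIrreducibles F (i + 1)).ncard := by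
  have hupper := mul_ncard_monicIrreducibles_le (F := F) (k := i) (by omega)
  have hlower := pow_card_le_mul_ncard_monicIrreducibles_add (F := F) (m := i + 1) (by omega)
  -- over `𝔽₂` the estimate below fails for `i = 3`, but the bounds give `N₃ ≤ 2 < 3 ≤ N₄`
  by_cases hexc : Fintype.card F = 2 ∧ i = 3
  · obtain ⟨hq, rfl⟩ := hexc
    simp only [hq, Nat.reduceAdd, Nat.reduceDiv, sum_Icc_succ_top (by norm_num : 1 ≤ 1 + 1),
      Icc_self, sum_singleton] at hupper hlower ⊢
    omega
  · have key := Nat.succ_mul_pow_add_mul_sum_le Fintype.one_lt_card hi fun hq => by tauto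
    refine Nat.le_of_mul_le_mul_left ?_ (by positivity : 0 < i * (i + 1))
    nlinarith

theorem ncard_monicIrreducibles_mono {i m : ℕ} (hi : 2 ≤ i) (him : i ≤ m) :
    (monicIrreducibles F i).ncard ≤ (monicIrreducibles F m).ncard :=
  monotoneOn_nat_Ici_of_le_succ (f := fun k => (monicIrreducibles F k).ncard)
    (fun _ hk => ncard_monicIrreducibles_le_succ hk) hi
    (hi.trans him) him

theorem exists_injOn_monicIrreducibles {i m : ℕ} (hi : 2 ≤ i) (him : i ≤ m) :
    ∃ φ : F[X] → F[X], Set.InjOn φ (monicIrreducibles F i) ∧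
      Set.MapsTo φ (monicIrreducibles F i) (monicIrreducibles F m) := by
  obtain ⟨φ, hmaps, hinj⟩ := (monicIrreducibles_finite (F := F) i).exists_injOn_of_encard_le
      (t := monicIrreducibles F m) <| by
    rw [← (monicIrreducibles_finite i).cast_ncard_eq,
      ← (monicIrreducibles_finite (F := F) m).cast_ncard_eq]
    exact_mod_cast ncard_monicIrreducibles_mono hi him
  exact ⟨φ, hinj, hmaps⟩

end FiniteField

open FiniteField

section

variable {F : Type*} [Field F]

def irreduciblesWithDegreeIn (F : Type*) [Field F] (s : Finset ℕ) : Set F[X] :=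
  {P | P.Monic ∧ Irreducible P ∧ P.eval 0 ≠ 0 ∧ P.natDegree ∈ s}

theorem ncard_irreduciblesWithDegreeIn [Fintype F] (s : Finset ℕ) :
    (irreduciblesWithDegreeIn F s).ncard = ∑ k ∈ s, Icnt F k := by
  set S : ℕ → Set F[X] :=
    fun k => {f | f.Monic ∧ Irreducible f ∧ f.natDegree = k ∧ f.eval 0 ≠ 0}
  have hunion : irreduciblesWithDegreeIn F s = ⋃ k ∈ (s : Set ℕ), S k := by
    ext P
    simp only [irreduciblesWithDegreeIn, S, Set.mem_iUnion, Set.mem_ofPred_eq, mem_coe,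
      exists_prop]
    exact ⟨fun ⟨hm, hi, h0, hs⟩ => ⟨_, hs, hm, hi, rfl, h0⟩,
      fun ⟨_, hs, hm, hi, hdeg, h0⟩ => ⟨hm, hi, h0, hdeg ▸ hs⟩⟩
  rw [hunion, s.finite_toSet.ncard_biUnion, finsum_mem_coe_finset]
  · rfl
  · exact fun k _ => (monicIrreducibles_finite k).subset fun f hf => ⟨hf.1, hf.2.1, hf.2.2.1⟩
  · exact fun k _ k' _ hkk' => Set.disjoint_left.2 fun f hf hf' => hkk' (hf.2.2.1 ▸ hf'.2.2.1)

namespace LowerBound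

variable {n d : ℕ}

def sources (F : Type*) [Field F] (n d : ℕ) : Set F[X] :=
  irreduciblesWithDegreeIn F (Icc 1 (n / 2) ∪ Icc (n - d) n)

theorem natDegree_of_mem_sources {P : F[X]} (hP : P ∈ sources F n d) :
    1 ≤ P.natDegree ∧ P.natDegree ≤ n / 2 ∨
      n - d ≤ P.natDegree ∧ P.natDegree ≤ n := by
  simpa only [mem_union, mem_Icc] using hP.2.2.2

theorem X_sub_one_mem_sources (hn : 0 < n) : X - C 1 ∈ sources F n d :=
  ⟨monic_X_sub_C 1, irreducible_X_sub_C 1, by simp, by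
    rw [natDegree_X_sub_C, mem_union, mem_Icc, mem_Icc]; omega⟩

variable [Fintype F]

noncomputable def pairing (n d i : ℕ) : F[X] → F[X] :=
  if h : 2 ≤ i ∧ d < i ∧ 2 * i < n then
    (exists_injOn_monicIrreducibles (F := F) h.1 (m := n - i) (by omega)).choose
  else fun _ => 1

noncomputable def lift (n d : ℕ) (P : F[X]) : F[X] :=
  if P.natDegree ≤ d then P ^ (n / P.natDegree) * (X - C 1) ^ (n % P.natDegree)
  else if n - d ≤ P.natDegree then P * (X - C 1) ^ (n - P.natDegree)
  else if 2 * P.natDegree = n then P ^ 2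
  else P * pairing n d P.natDegree P

theorem pairing_of_not {i : ℕ} (h : ¬(2 ≤ i ∧ d < i ∧ 2 * i < n)) (P : F[X]) :
    pairing n d i P = 1 := by
  rw [pairing, dif_neg h]

theorem pairing_mapsTo {i : ℕ} (h : 2 ≤ i ∧ d < i ∧ 2 * i < n) :
    Set.MapsTo (pairing n d i) (monicIrreducibles F i) (monicIrreducibles F (n - i)) := by
  rw [pairing, dif_pos h]
  exact (exists_injOn_monicIrreducibles h.1 (by omega)).choose_spec.2

theorem pairing_injOn {i : ℕ} (h : 2 ≤ i ∧ d < i ∧ 2 * i < n) :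
    Set.InjOn (pairing n d i) (monicIrreducibles F i) := by
  rw [pairing, dif_pos h]
  exact (exists_injOn_monicIrreducibles h.1 (by omega)).choose_spec.1

theorem monic_pairing {i : ℕ} {P : F[X]} (hP : P ∈ monicIrreducibles F i) :
    (pairing n d i P).Monic := by
  by_cases h : 2 ≤ i ∧ d < i ∧ 2 * i < n
  · exact (pairing_mapsTo h hP).1
  · rw [pairing_of_not h]; exact monic_one

theorem eval_pairing_ne_zero {i : ℕ} {P : F[X]} (hP : P ∈ monicIrreducibles F i) :
    (pairing n d i P).eval 0 ≠ 0 := by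
  by_cases h : 2 ≤ i ∧ d < i ∧ 2 * i < n
  · obtain ⟨-, hirr, hdeg⟩ := pairing_mapsTo h hP
    exact eval_zero_ne_zero_of_irreducible hirr (by omega)
  · rw [pairing_of_not h, eval_one]; exact one_ne_zero

/-- The partner of `P` has degree strictly between `n / 2` and `n - d`, where no source lies. -/
theorem isCoprime_pairing {Q P : F[X]} (hQ : Q ∈ sources F n d)
    (hP : P ∈ monicIrreducibles F P.natDegree) :
    IsCoprime Q (pairing n d P.natDegree P) := by
  by_cases h : 2 ≤ P.natDegree ∧ d < P.natDegree ∧ 2 * P.natDegree < n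
  · obtain ⟨hWm, hWi, hWdeg⟩ := pairing_mapsTo h hP
    refine isCoprime_of_monic_of_irreducible_of_ne hQ.1 hQ.2.1 hWm hWi fun hQW => ?_
    have := natDegree_of_mem_sources hQ
    rw [hQW, hWdeg] at this
    omega
  · rw [pairing_of_not h]; exact isCoprime_one_right

theorem isCoprime_pairing_pairing {P P' : F[X]} (hP : P ∈ monicIrreducibles F P.natDegree)
    (hP' : P' ∈ monicIrreducibles F P'.natDegree) (hne : P ≠ P') :
    IsCoprime (pairing n d P.natDegree P) (pairing n d P'.natDegree P') := by
  by_cases h : 2 ≤ P.natDegree ∧ d < P.natDegree ∧ 2 * P.natDegree < n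
  · by_cases h' : 2 ≤ P'.natDegree ∧ d < P'.natDegree ∧ 2 * P'.natDegree < n
    · obtain ⟨hWm, hWi, hWdeg⟩ := pairing_mapsTo h hP
      obtain ⟨hWm', hWi', hWdeg'⟩ := pairing_mapsTo h' hP'
      refine isCoprime_of_monic_of_irreducible_of_ne hWm hWi hWm' hWi' fun hWW => hne ?_
      have hdeg : P'.natDegree = P.natDegree := by
        have := congrArg natDegree hWW
        omega
      rw [hdeg] at hWW hP'
      exact pairing_injOn h hP hP' hWW
    · rw [pairing_of_not h']; exact isCoprime_one_right
  · rw [pairing_of_not h]; exact isCoprime_one_left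

theorem isCoprime_mul_pairing {P P' : F[X]} (hP : P ∈ sources F n d)
    (hP' : P' ∈ sources F n d) (hne : P ≠ P') :
    IsCoprime (P * pairing n d P.natDegree P) (P' * pairing n d P'.natDegree P') := by
  have hPm : P ∈ monicIrreducibles F P.natDegree := ⟨hP.1, hP.2.1, rfl⟩
  have hP'm : P' ∈ monicIrreducibles F P'.natDegree := ⟨hP'.1, hP'.2.1, rfl⟩
  exact .mul_left
    (.mul_right (isCoprime_of_monic_of_irreducible_of_ne hP.1 hP.2.1 hP'.1 hP'.2.1 hne)
      (isCoprime_pairing hP hP'm))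
    (.mul_right (isCoprime_pairing hP' hPm).symm (isCoprime_pairing_pairing hPm hP'm hne))

theorem exists_lift_eq (hd : 2 * d < n) {P : F[X]} (hP : P ∈ sources F n d) :
    ∃ a e, e ≤ d ∧ lift n d P = (P * pairing n d P.natDegree P) ^ a * (X - C 1) ^ e := by
  have hdeg := natDegree_of_mem_sources hP
  unfold lift
  split_ifs with h₁ h₂ h₃
  · refine ⟨n / P.natDegree, n % P.natDegree, (Nat.mod_lt n (by omega)).le.trans h₁, ?_⟩
    rw [pairing_of_not (by omega), mul_one]
  · exact ⟨1, n - P.natDegree, by omega, by rw [pairing_of_not (by omega), mul_one, pow_one]⟩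
  · exact ⟨2, 0, Nat.zero_le _, by rw [pairing_of_not (by omega), mul_one, pow_zero, mul_one]⟩
  · exact ⟨1, 0, Nat.zero_le _, by rw [pow_one, pow_zero, mul_one]⟩

theorem natDegree_lift (hd₁ : 1 ≤ d) (hd : 2 * d < n) {P : F[X]} (hP : P ∈ sources F n d) :
    (lift n d P).natDegree = n := by
  have hdeg := natDegree_of_mem_sources hP
  have hℓ : (X - C 1 : F[X]).Monic := monic_X_sub_C 1
  unfold lift
  split_ifs with h₁ h₂ h₃
  · rw [(hP.1.pow _).natDegree_mul (hℓ.pow _), natDegree_pow, natDegree_pow, natDegree_X_sub_C,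
      mul_one, mul_comm, Nat.div_add_mod]
  · rw [hP.1.natDegree_mul (hℓ.pow _), natDegree_pow, natDegree_X_sub_C]
    omega
  · rw [natDegree_pow]
    omega
  · have h : 2 ≤ P.natDegree ∧ d < P.natDegree ∧ 2 * P.natDegree < n := by omega
    rw [hP.1.natDegree_mul (pairing_mapsTo h ⟨hP.1, hP.2.1, rfl⟩).1,
      (pairing_mapsTo h ⟨hP.1, hP.2.1, rfl⟩).2.2]
    omega

theorem monic_lift (hd : 2 * d < n) {P : F[X]} (hP : P ∈ sources F n d) :
    (lift n d P).Monic := by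
  obtain ⟨a, e, -, heq⟩ := exists_lift_eq hd hP
  rw [heq]
  exact ((hP.1.mul (monic_pairing ⟨hP.1, hP.2.1, rfl⟩)).pow a).mul ((monic_X_sub_C 1).pow e)

theorem eval_lift_ne_zero (hd : 2 * d < n) {P : F[X]} (hP : P ∈ sources F n d) :
    (lift n d P).eval 0 ≠ 0 := by
  obtain ⟨a, e, -, heq⟩ := exists_lift_eq hd hP
  rw [heq, eval_mul, eval_pow, eval_pow, eval_mul]
  refine mul_ne_zero (pow_ne_zero _ (mul_ne_zero hP.2.2.1
    (eval_pairing_ne_zero ⟨hP.1, hP.2.1, rfl⟩))) (pow_ne_zero _ ?_)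
  simp

/-- A common divisor of two distinct lifts divides `(X - 1) ^ e`, where `e ≤ d` is the exponent
in the lift of whichever source is not `X - 1`. -/
theorem natDegree_le_of_dvd_lift (hd : 2 * d < n) {P P' h : F[X]} (hP : P ∈ sources F n d)
    (hP' : P' ∈ sources F n d) (hne : P ≠ P') (h₁ : h ∣ lift n d P)
    (h₂ : h ∣ lift n d P') :
    h.natDegree ≤ d := by
  wlog hPℓ : P ≠ X - C 1 generalizing P P'
  · exact this hP' hP hne.symm h₂ h₁ (not_not.1 hPℓ ▸ hne.symm)
  have hℓ := X_sub_one_mem_sources (F := F) (n := n) (d := d) (by omega)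
  obtain ⟨a, e, he, heq⟩ := exists_lift_eq hd hP
  obtain ⟨a', e', -, heq'⟩ := exists_lift_eq hd hP'
  have hcop : IsCoprime ((P * pairing n d P.natDegree P) ^ a) (lift n d P') := by
    rw [heq']
    refine .pow_left (.mul_right (isCoprime_mul_pairing hP hP' hne).pow_right (.pow_right ?_))
    simpa only [natDegree_X_sub_C, pairing_of_not (by omega : ¬(2 ≤ 1 ∧ d < 1 ∧ 2 * 1 < n)),
      mul_one] using isCoprime_mul_pairing hP hℓ hPℓ
  have := natDegree_le_of_dvd ((hcop.of_isCoprime_of_dvd_right h₂).symm.dvd_of_dvd_mul_left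
    (heq ▸ h₁)) (pow_ne_zero e (X_sub_C_ne_zero 1))
  rw [natDegree_pow, natDegree_X_sub_C, mul_one] at this
  omega

theorem injOn_lift (hd₁ : 1 ≤ d) (hd : 2 * d < n) : Set.InjOn (lift n d) (sources F n d) := by
  intro P hP P' hP' heq
  by_contra hne
  have := natDegree_le_of_dvd_lift hd hP hP' hne dvd_rfl (heq ▸ dvd_rfl)
  rw [natDegree_lift hd₁ hd hP] at this
  omega

end LowerBound

end

open LowerBound

/-- Lower bound: over a finite field, for `1 ≤ d < n/2`, there is a family `R ⊆ S_n` with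
pairwise gcd of degree at most `d` and cardinality at least
`(Σ_{i=1}^{⌊n/2⌋} I_i) + (Σ_{i=n-d}^{n-1} I_i) + I_n`. -/
theorem lower_bound (F : Type*) [Field F] [Fintype F] [DecidableEq F] (n d : ℕ) (hd1 : 1 ≤ d)
    (hd2 : 2 * d < n) :
    ∃ R : Set F[X],
      (∀ f ∈ R, f.Monic ∧ f.natDegree = n ∧ f.eval 0 ≠ 0) ∧
      (∀ f ∈ R, ∀ g ∈ R, f ≠ g → (EuclideanDomain.gcd f g).natDegree ≤ d) ∧
      (∑ i ∈ Finset.Icc 1 (n / 2), Icnt F i) +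
        (∑ i ∈ Finset.Icc (n - d) (n - 1), Icnt F i) + Icnt F n ≤ R.ncard := by
  refine ⟨lift n d '' sources F n d, ?_, ?_, ?_⟩
  · rintro _ ⟨P, hP, rfl⟩
    exact ⟨monic_lift hd2 hP, natDegree_lift hd1 hd2 hP, eval_lift_ne_zero hd2 hP⟩
  · rintro _ ⟨P, hP, rfl⟩ _ ⟨P', hP', rfl⟩ hne
    exact natDegree_le_of_dvd_lift hd2 hP hP' (ne_of_apply_ne _ hne)
      (EuclideanDomain.gcd_dvd_left _ _) (EuclideanDomain.gcd_dvd_right _ _)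
  · obtain ⟨m, rfl⟩ : ∃ m, n = m + 1 := ⟨n - 1, by omega⟩
    rw [(injOn_lift hd1 hd2).ncard_image, sources, ncard_irreduciblesWithDegreeIn,
      sum_union (disjoint_left.2 fun k hk hk' => by rw [mem_Icc] at hk hk'; omega),
      sum_Icc_succ_top (by omega), Nat.add_sub_cancel, add_assoc]
end
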